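/- arXiv:2504.03532 — 3 statements merged into one kernel-verified Lean document; each statement's English description precedes it below -/
import Mathlib

section
/- In ZFε, every ε-TOD is an ε-ordinal, i.e. every ε-transitive set satisfying ε-trichotomy is an ε-transitive set all of whose ε-members are ε-transitive. -/
namespace ZFEps

variable {M : Type*}

/-- The scheme of ε-induction of ZFε (stated for all predicates on the model). -/
def EpsInduction (eps : M → M → Prop) : Prop :=
  ∀ P : M → Prop, (∀ a, (∀ b, eps b a → P b) → P a) → ∀ a, P a

/-- `a` is ε-transitive: `∀x ε a ∀y ε x (y ε a)`. -/
def EpsTrans (eps : M → M → Prop) (a : M) : Prop :=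
  ∀ x, eps x a → ∀ y, eps y x → eps y a

/-- Exactly one of three alternatives holds. -/
def ExactlyOne (p q r : Prop) : Prop :=
  (p ∧ ¬q ∧ ¬r) ∨ (¬p ∧ q ∧ ¬r) ∨ (¬p ∧ ¬q ∧ r)

/-- `a` is an ε-trichotomous ordinal (ε-TOD): an ε-transitive set such that for
all `b, c ε a` exactly one of `b ε c`, `c ε b`, `b = c` holds. -/
def EpsTOD (eps : M → M → Prop) (a : M) : Prop :=
  EpsTrans eps a ∧
    ∀ b c, eps b a → eps c a → ExactlyOne (eps b c) (eps c b) (b = c)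

/-- `a` is an ε-ordinal: an ε-transitive set of ε-transitive sets. -/
def EpsOrd (eps : M → M → Prop) (a : M) : Prop :=
  EpsTrans eps a ∧ ∀ b, eps b a → EpsTrans eps b


theorem no_two_cycle (eps : M → M → Prop) (hind : EpsInduction eps) :
    ∀ z u, eps u z → ¬ eps z u := by
  intro z
  refine hind (fun z => ∀ u, eps u z → ¬ eps z u) ?_ z
  intro z ih u huz hzu
  exact ih u huz z hzu huz

theorem no_three_cycle (eps : M → M → Prop) (hind : EpsInduction eps) :
    ∀ z u v, eps u z → eps v u → ¬ eps z v := by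
  intro z
  refine hind (fun z => ∀ u v, eps u z → eps v u → ¬ eps z v) ?_ z
  intro z ih u v huz hvu hzv
  exact ih u huz v z hvu hzv huz

/-- in ZFε, every ε-TOD is an ε-ordinal (an ε-transitive set of
ε-transitive sets). -/
theorem epsOrd_of_epsTOD (eps : M → M → Prop) (hind : EpsInduction eps)
    (a : M) (ha : EpsTOD eps a) : EpsOrd eps a := by
  obtain ⟨htr, htri⟩ := ha
  refine ⟨htr, ?_⟩
  intro b hba x hxb y hyx
  have hxa : eps x a := htr b hba x hxb
  have hya : eps y a := htr x hxa y hyx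
  rcases htri y b hya hba with ⟨h, _⟩ | ⟨_, h, _⟩ | ⟨_, _, h⟩
  · exact h
  · exact absurd h (no_three_cycle eps hind b x y hxb hyx)
  · subst h
    exact absurd hxb (no_two_cycle eps hind x y hyx)


end ZFEps
end

section
/- In ZFε, if a is an ε-TOD then any two ε-members of a that are extensionally equal are identical: ∀x ε a ∀y ε a (x ≃ y → x = y). -/
namespace ZFEps

variable {M : Type*}

/-- Extensional equality: having the same ∈-members. -/
def Simeq (mem : M → M → Prop) (x y : M) : Prop := ∀ z, mem z x ↔ mem z y

/-- `∈` is the extensional collapse of `ε`: `x ∈ y ↔ ∃ x' ε y (x' ≃ x)`. -/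
def MemIsCollapse (eps mem : M → M → Prop) : Prop :=
  ∀ x y, mem x y ↔ ∃ x', eps x' y ∧ Simeq mem x' x

/-- `a` is ∈-transitive. -/
def InTrans (mem : M → M → Prop) (a : M) : Prop :=
  ∀ b, mem b a → ∀ c, mem c b → mem c a

/-- `a` is an ∈-ordinal: an ∈-transitive set of ∈-transitive sets. -/
def InOrd (mem : M → M → Prop) (a : M) : Prop :=
  InTrans mem a ∧ ∀ b, mem b a → InTrans mem b

/-- in ZFε, if `a` is an ε-TOD then any two ε-members of `a` that
are extensionally equal are identical. (Uses that `∈` is the collapse of `ε`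
and that no set is extensionally equal to one of its ∈-members.) -/
theorem epsTOD_simeq_eq (eps mem : M → M → Prop)
    (hcol : MemIsCollapse eps mem)
    (hfound : ∀ x y, mem x y → ¬ Simeq mem x y)
    (a : M) (ha : EpsTOD eps a) :
    ∀ x y, eps x a → eps y a → Simeq mem x y → x = y := by
  intro x y hx hy hsim
  rcases ha.2 x y hx hy with ⟨hxy, _, _⟩ | ⟨_, hyx, _⟩ | ⟨_, _, h⟩
  · exact absurd hsim (hfound x y ((hcol x y).2 ⟨x, hxy, fun z => Iff.rfl⟩))
  · exact absurd (fun z => (hsim z).symm) (hfound y x ((hcol y x).2 ⟨y, hyx, fun z => Iff.rfl⟩))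
  · exact h

end ZFEps
end

section
/- In ZFε, every ε-ordinal is an ∈-ordinal: if a is an ε-transitive set of ε-transitive sets, then a is an ∈-transitive set of ∈-transitive sets. -/
namespace ZFEps

variable {M : Type*}

/-- in ZFε, every ε-ordinal is an ∈-ordinal: every ε-transitive
set of ε-transitive sets is an ∈-transitive set of ∈-transitive sets. -/
theorem inOrd_of_epsOrd (eps mem : M → M → Prop)
    (hcol : MemIsCollapse eps mem)
    (a : M) (ha : EpsOrd eps a) : InOrd mem a := by
  obtain ⟨hta, hmem⟩ := ha
  constructor
  · intro b hb c hc
    obtain ⟨b', hb'a, hb'b⟩ := (hcol b a).mp hb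
    have hcb' : mem c b' := (hb'b c).mpr hc
    obtain ⟨c', hc'b', hc'c⟩ := (hcol c b').mp hcb'
    exact (hcol c a).mpr ⟨c', hta b' hb'a c' hc'b', hc'c⟩
  · intro b hb c hc d hd
    obtain ⟨b', hb'a, hb'b⟩ := (hcol b a).mp hb
    have htb' := hmem b' hb'a
    have hcb' : mem c b' := (hb'b c).mpr hc
    obtain ⟨c', hc'b', hc'c⟩ := (hcol c b').mp hcb'
    have hdc' : mem d c' := (hc'c d).mpr hd
    obtain ⟨d', hd'c', hd'd⟩ := (hcol d c').mp hdc'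
    exact (hb'b d).mp ((hcol d b').mpr ⟨d', htb' c' hc'b' d' hd'c', hd'd⟩)

end ZFEps
end
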